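/- Fix μ > 1, σ̄² > 0, c > 0 with c + σ̄²/μ ≤ σ̄² μ. Let ξ(τ) be the piecewise total detection error function: ξ(τ) = 1 for τ < σ̄²/μ; ξ(τ) = (1/(2 ln μ)) ln(σ̄² μ/τ) for σ̄²/μ ≤ τ < c + σ̄²/μ; ξ(τ) = (1/(2 ln μ))[ln(σ̄² μ/τ) + ln(μ(τ−c)/σ̄²)] for c + σ̄²/μ ≤ τ ≤ σ̄² μ; ξ(τ) = (1/(2 ln μ)) ln(μ(τ−c)/σ̄²) for σ̄² μ < τ ≤ c + σ̄² μ; and ξ(τ) = 1 for τ > c + σ̄² μ. Then ξ attains its global minimum at τ* = c + σ̄²/μ, with minimum value ξ* = (1/(2 ln μ)) · ln(μ σ̄² / (c + σ̄²/μ)). -/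

import Mathlib

open Real Set

noncomputable def xiTotal (μ σ2 c τ : ℝ) : ℝ :=
  if τ < σ2 / μ then 1
  else if τ < c + σ2 / μ then (1 / (2 * Real.log μ)) * Real.log (σ2 * μ / τ)
  else if τ ≤ σ2 * μ then
    (1 / (2 * Real.log μ)) * (Real.log (σ2 * μ / τ) + Real.log (μ * (τ - c) / σ2))
  else if τ ≤ c + σ2 * μ then (1 / (2 * Real.log μ)) * Real.log (μ * (τ - c) / σ2)
  else 1

/-!
Up to the positive factor `1 / (2 log μ)`, `ξ` is the sum of a false-alarm term `log (σ̄²μ/τ)`,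
decreasing in `τ` and present for `τ ≤ σ̄²μ`, and a missed-detection term `log (μ(τ - c)/σ̄²)`,
increasing in `τ` and present for `τ ≥ c + σ̄²/μ`, where it starts from `0`.
Below `τ* = c + σ̄²/μ` only the decreasing term is present. Above it both terms add up to
`log (μ² (1 - c/τ))`, which increases, and dropping the false-alarm term once it has become
negative (`τ > σ̄²μ`) only increases `ξ`. Finally `ξ(τ*) ≤ 1` because `τ* ≥ σ̄²/μ`.
-/

lemma log_div_nonpos_of_le {a b : ℝ} (ha : 0 ≤ a) (hab : a ≤ b) : log (a / b) ≤ 0 :=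
  log_nonpos (div_nonneg ha (ha.trans hab)) (div_le_one_of_le₀ hab (ha.trans hab))

variable {μ σ2 c τ : ℝ}

lemma xiTotal_opt_eq (hμ : μ ≠ 0) (hσ : σ2 ≠ 0) (hc : 0 ≤ c)
    (hfeas : c + σ2 / μ ≤ σ2 * μ) :
    xiTotal μ σ2 c (c + σ2 / μ) = 1 / (2 * log μ) * log (μ * σ2 / (c + σ2 / μ)) := by
  have hmissed : μ * (c + σ2 / μ - c) / σ2 = 1 := by field_simp; ring
  rw [xiTotal, if_neg (by linarith), if_neg (lt_irrefl _), if_pos hfeas, hmissed, log_one,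
    add_zero, mul_comm σ2 μ]

lemma log_opt_le_two_mul_log (hμ : 0 < μ) (hσ : 0 < σ2) (hc : 0 ≤ c) :
    log (μ * σ2 / (c + σ2 / μ)) ≤ 2 * log μ := by
  have hlower : 0 < σ2 / μ := by positivity
  calc log (μ * σ2 / (c + σ2 / μ))
      ≤ log (μ * σ2 / (σ2 / μ)) := by
        gcongr
        linarith
    _ = 2 * log μ := by
        rw [show μ * σ2 / (σ2 / μ) = μ * μ by field_simp, log_mul hμ.ne' hμ.ne']
        ring

lemma log_opt_le_log_falseAlarm (hμ : 0 < μ) (hσ : 0 < σ2) (hτ : 0 < τ)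
    (hτopt : τ ≤ c + σ2 / μ) :
    log (μ * σ2 / (c + σ2 / μ)) ≤ log (σ2 * μ / τ) := by
  rw [mul_comm μ σ2]
  have hopt : 0 < c + σ2 / μ := hτ.trans_le hτopt
  exact log_le_log (by positivity) (div_le_div_of_nonneg_left (by positivity) hτ hτopt)

lemma log_opt_le_log_falseAlarm_add_log_missed (hμ : 0 < μ) (hσ : 0 < σ2) (hc : 0 ≤ c)
    (hτopt : c + σ2 / μ ≤ τ) :
    log (μ * σ2 / (c + σ2 / μ)) ≤ log (σ2 * μ / τ) + log (μ * (τ - c) / σ2) := by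
  have hopt : 0 < c + σ2 / μ := by positivity
  have hτ : 0 < τ := hopt.trans_le hτopt
  have hτc : 0 < τ - c := by linarith [div_pos hσ hμ]
  rw [← log_mul (by positivity) (by positivity)]
  apply log_le_log (by positivity)
  rw [show σ2 * μ / τ * (μ * (τ - c) / σ2) = μ * μ * (τ - c) / τ by field_simp,
    div_le_div_iff₀ hopt hτ]
  -- the difference of the two sides is `μ² c (τ - τ*)`
  have hgap : 0 ≤ μ * c * (μ * (τ - c) - σ2) := by
    have : σ2 ≤ μ * (τ - c) := by rw [← div_le_iff₀' hμ]; linarith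
    exact mul_nonneg (mul_nonneg hμ.le hc) (by linarith)
  have hexpand : μ * μ * (τ - c) * (c + σ2 / μ) = μ * (τ - c) * (μ * c + σ2) := by
    field_simp
  nlinarith

theorem xi_global_min (μ σ2 c : ℝ) (hμ : 1 < μ) (hσ : 0 < σ2) (hc : 0 < c)
    (hfeas : c + σ2 / μ ≤ σ2 * μ) :
    (∀ τ : ℝ, xiTotal μ σ2 c (c + σ2 / μ) ≤ xiTotal μ σ2 c τ) ∧
    xiTotal μ σ2 c (c + σ2 / μ) =
      (1 / (2 * Real.log μ)) * Real.log (μ * σ2 / (c + σ2 / μ)) := by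
  have hμ0 : 0 < μ := one_pos.trans hμ
  have hlog : 0 < log μ := log_pos hμ
  have hscale : 0 < 1 / (2 * log μ) := by positivity
  have hval := xiTotal_opt_eq hμ0.ne' hσ.ne' hc.le hfeas
  refine ⟨fun τ => ?_, hval⟩
  have hle_one : 1 / (2 * log μ) * log (μ * σ2 / (c + σ2 / μ)) ≤ 1 := by
    rw [div_mul_eq_mul_div, one_mul, div_le_one (by positivity)]
    exact log_opt_le_two_mul_log hμ0 hσ hc.le
  rw [hval, xiTotal]
  split_ifs with hlow hopt hfa
  · exact hle_one
  · have hτ : 0 < τ := (div_pos hσ hμ0).trans_le (not_lt.1 hlow)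
    exact mul_le_mul_of_nonneg_left
      (log_opt_le_log_falseAlarm hμ0 hσ hτ hopt.le) hscale.le
  · exact mul_le_mul_of_nonneg_left
      (log_opt_le_log_falseAlarm_add_log_missed hμ0 hσ hc.le (not_lt.1 hopt)) hscale.le
  · have hfa_nonpos : log (σ2 * μ / τ) ≤ 0 :=
      log_div_nonpos_of_le (by positivity) (not_le.1 hfa).le
    exact mul_le_mul_of_nonneg_left
      ((log_opt_le_log_falseAlarm_add_log_missed hμ0 hσ hc.le (not_lt.1 hopt)).trans
        (add_le_of_nonpos_left hfa_nonpos)) hscale.le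
  · exact hle_one
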